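/- Let p, q ∈ [1,∞] with 1/p + 1/q = 1, let F ⊆ [0,1]ⁿ be a convex set, η > 0, α ≥ 1, and let R : ℝⁿ → ℝ be β-strongly convex with respect to the ℓ_p norm on F for some β > 0. Let x₀ = 0 and x₁,…,x_T ∈ [0,1]ⁿ, and for t = 1,…,T let f_t ∈ F minimize f ↦ ⟨f, Σ_{s=1}^{t-1} x_s + α x_{t-1}⟩ + R(f)/η over F, and let h_t ∈ F minimize f ↦ ⟨f, Σ_{s=1}^{t-1} x_s + α x_t⟩ + R(f)/η over F. Then for every t, ‖h_t − f_t‖_p ≤ (ηα/β) ‖x_t − x_{t-1}‖_q. -/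

import Mathlib

open scoped BigOperators ENNReal

noncomputable section

/-- The bilinear pairing `⟨a, b⟩ = ∑ i, a i * b i` on `ℝⁿ`. -/
def ip {n : ℕ} (a b : Fin n → ℝ) : ℝ := ∑ i, a i * b i

/-- The `ℓ_p` norm on `ℝⁿ`, for `p ∈ [1, ∞]` (`‖a‖_∞ = max_i |a i|`). -/
def lpNorm {n : ℕ} (p : ℝ≥0∞) (a : Fin n → ℝ) : ℝ :=
  if p = ⊤ then ⨆ i, |a i| else (∑ i, |a i| ^ p.toReal) ^ (1 / p.toReal)

/-- `R` is `β`-strongly convex with respect to the `ℓ_p` norm on the convex set `F`. -/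
def StronglyConvexOnWrt {n : ℕ} (F : Set (Fin n → ℝ)) (β : ℝ) (p : ℝ≥0∞)
    (R : (Fin n → ℝ) → ℝ) : Prop :=
  ∀ a ∈ F, ∀ b ∈ F, ∀ l : ℝ, 0 ≤ l → l ≤ 1 →
    R (l • a + (1 - l) • b) ≤
      l * R a + (1 - l) * R b - β / 2 * l * (1 - l) * (lpNorm p (a - b)) ^ 2

/-! Both iterates minimise an objective `⟨·, z⟩ + R / η` that is `β / η`-strongly convex on `F`,
and the two linear terms differ by `α (x t - x (t - 1))`. At a minimiser of a strongly convex
function the function grows at least quadratically along `F`; evaluating this growth for each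
iterate at the other one and adding the two inequalities gives
`(β / η) ‖h t - f t‖_p² ≤ α ⟨f t - h t, x t - x (t - 1)⟩`, and Hölder's inequality for the
conjugate pair `(p, q)` turns this into the claimed bound. -/

section

variable {n : ℕ}

lemma ip_eq_dotProduct (a b : Fin n → ℝ) : ip a b = a ⬝ᵥ b := rfl

lemma lpNorm_eq_norm_toLp {p : ℝ≥0∞} [Fact (1 ≤ p)] (a : Fin n → ℝ) :
    lpNorm p a = ‖WithLp.toLp p a‖ := by
  unfold lpNorm
  split_ifs with htop
  · subst htop
    simp [PiLp.norm_eq_ciSup]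
  · simp [PiLp.norm_eq_sum (ENNReal.toReal_pos (zero_lt_one.trans_le Fact.out).ne' htop)]

lemma lpNorm_top (a : Fin n → ℝ) : lpNorm ⊤ a = ⨆ i, |a i| := by simp [lpNorm]

lemma lpNorm_one (a : Fin n → ℝ) : lpNorm 1 a = ∑ i, |a i| := by simp [lpNorm]

variable {p q : ℝ≥0∞}

lemma lpNorm_nonneg [Fact (1 ≤ p)] (a : Fin n → ℝ) : 0 ≤ lpNorm p a := by
  rw [lpNorm_eq_norm_toLp]
  exact norm_nonneg _

lemma lpNorm_sub_comm [Fact (1 ≤ p)] (a b : Fin n → ℝ) :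
    lpNorm p (a - b) = lpNorm p (b - a) := by
  simp only [lpNorm_eq_norm_toLp, WithLp.toLp_sub, norm_sub_rev]

lemma lpNorm_smul [Fact (1 ≤ p)] (c : ℝ) (a : Fin n → ℝ) :
    lpNorm p (c • a) = |c| * lpNorm p a := by
  simp only [lpNorm_eq_norm_toLp, WithLp.toLp_smul, norm_smul, Real.norm_eq_abs]

lemma ip_le_lpNorm_top_mul_lpNorm_one (a b : Fin n → ℝ) :
    ip a b ≤ lpNorm ⊤ a * lpNorm 1 b := by
  rw [lpNorm_top, lpNorm_one, Finset.mul_sum]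
  refine Finset.sum_le_sum fun i _ => ?_
  calc a i * b i ≤ |a i| * |b i| := by rw [← abs_mul]; exact le_abs_self _
    _ ≤ (⨆ j, |a j|) * |b i| := by
      gcongr
      exact le_ciSup (Set.finite_range fun j => |a j|).bddAbove i

lemma ip_le_lpNorm_mul_lpNorm [p.HolderConjugate q] (a b : Fin n → ℝ) :
    ip a b ≤ lpNorm p a * lpNorm q b := by
  rcases eq_or_ne p ⊤ with rfl | hp
  · obtain rfl : q = 1 := (ENNReal.HolderConjugate.eq_top_iff_eq_one ⊤ q).mp rfl
    exact ip_le_lpNorm_top_mul_lpNorm_one a b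
  rcases eq_or_ne q ⊤ with rfl | hq
  · obtain rfl : p = 1 := (ENNReal.HolderConjugate.eq_top_iff_eq_one ⊤ p).mp rfl
    rw [ip_eq_dotProduct, dotProduct_comm, mul_comm]
    exact ip_le_lpNorm_top_mul_lpNorm_one b a
  have hpq : p.toReal.HolderConjugate q.toReal := by
    simpa using ENNReal.HolderTriple.toReal 1
      (ENNReal.toReal_pos (ENNReal.HolderConjugate.ne_zero p q) hp)
      (ENNReal.toReal_pos (ENNReal.HolderConjugate.ne_zero q p) hq)
  simpa [ip, lpNorm, hp, hq] using Real.inner_le_Lp_mul_Lq Finset.univ a b hpq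

open Filter Topology

variable {F : Set (Fin n → ℝ)} {β : ℝ} {R : (Fin n → ℝ) → ℝ}

lemma StronglyConvexOnWrt.ip_add_div (hR : StronglyConvexOnWrt F β p R) {η : ℝ} (hη : 0 ≤ η)
    (z : Fin n → ℝ) : StronglyConvexOnWrt F (β / η) p (fun f => ip f z + R f / η) := by
  intro a ha b hb l hl0 hl1
  have hlin : ip (l • a + (1 - l) • b) z = l * ip a z + (1 - l) * ip b z := by
    simp only [ip_eq_dotProduct, add_dotProduct, smul_dotProduct, smul_eq_mul]
  have hRη := div_le_div_of_nonneg_right (hR a ha b hb l hl0 hl1) hη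
  beta_reduce
  rw [hlin]
  linear_combination hRη

lemma StronglyConvexOnWrt.add_sq_le_of_isMinOn (hR : StronglyConvexOnWrt F β p R)
    (hF : Convex ℝ F) {m g : Fin n → ℝ} (hm : m ∈ F) (hmin : IsMinOn R F m) (hg : g ∈ F) :
    R m + β / 2 * lpNorm p (g - m) ^ 2 ≤ R g := by
  set D := lpNorm p (g - m)
  have hstep : ∀ l ∈ Set.Ioc (0 : ℝ) 1, R m + β / 2 * (1 - l) * D ^ 2 ≤ R g := by
    rintro l ⟨hl0, hl1⟩
    have hmix := hR g hg m hm l hl0.le hl1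
    have hle : R m ≤ R (l • g + (1 - l) • m) :=
      hmin (hF hg hm hl0.le (sub_nonneg.2 hl1) (add_sub_cancel l 1))
    refine le_of_mul_le_mul_left ?_ hl0
    linear_combination hmix + hle
  have hlim : Tendsto (fun l : ℝ => R m + β / 2 * (1 - l) * D ^ 2) (𝓝[>] 0)
      (𝓝 (R m + β / 2 * (1 - 0) * D ^ 2)) :=
    (Continuous.tendsto (by fun_prop) 0).mono_left nhdsWithin_le_nhds
  simpa using le_of_tendsto hlim (mem_of_superset (Ioc_mem_nhdsGT zero_lt_one) hstep)

theorem StronglyConvexOnWrt.lpNorm_sub_le_of_isMinOn [p.HolderConjugate q]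
    (hR : StronglyConvexOnWrt F β p R) (hF : Convex ℝ F) (hβ : 0 < β) {η : ℝ} (hη : 0 < η)
    {z₁ z₂ m₁ m₂ : Fin n → ℝ}
    (hm₁ : m₁ ∈ F) (hmin₁ : IsMinOn (fun f => ip f z₁ + R f / η) F m₁)
    (hm₂ : m₂ ∈ F) (hmin₂ : IsMinOn (fun f => ip f z₂ + R f / η) F m₂) :
    lpNorm p (m₁ - m₂) ≤ η / β * lpNorm q (z₁ - z₂) := by
  have : Fact (1 ≤ p) := ⟨ENNReal.HolderConjugate.one_le p q⟩
  have : Fact (1 ≤ q) := ⟨ENNReal.HolderConjugate.one_le q p⟩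
  have h₁ := (hR.ip_add_div hη.le z₁).add_sq_le_of_isMinOn hF hm₁ hmin₁ hm₂
  have h₂ := (hR.ip_add_div hη.le z₂).add_sq_le_of_isMinOn hF hm₂ hmin₂ hm₁
  have hholder := ip_le_lpNorm_mul_lpNorm (p := p) (q := q) (m₂ - m₁) (z₁ - z₂)
  rw [lpNorm_sub_comm m₂ m₁] at h₁ hholder
  set D := lpNorm p (m₁ - m₂)
  set N := lpNorm q (z₁ - z₂)
  have hgap : ip m₂ z₁ - ip m₁ z₁ + (ip m₁ z₂ - ip m₂ z₂) = ip (m₂ - m₁) (z₁ - z₂) := by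
    simp only [ip_eq_dotProduct, sub_dotProduct, dotProduct_sub]
    ring
  have hquad : β / η * D ^ 2 ≤ D * N := by
    linear_combination h₁ + h₂ + hgap + hholder
  have hD0 : 0 ≤ D := lpNorm_nonneg _
  have hN0 : 0 ≤ N := lpNorm_nonneg _
  obtain hD | hD := hD0.eq_or_lt
  · rw [← hD]
    positivity
  have hlin : β / η * D ≤ N := le_of_mul_le_mul_left (by linear_combination hquad) hD
  calc D = η / β * (β / η * D) := by field_simp
    _ ≤ η / β * N := by gcongr

end

theorem aftrl_lookahead_close_general {n T : ℕ} (p q : ℝ≥0∞)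
    (hpq : 1 / p + 1 / q = 1)
    (F : Set (Fin n → ℝ)) (hFconv : Convex ℝ F)
    (η : ℝ) (hη : 0 < η) (α : ℝ) (hα : 1 ≤ α) (β : ℝ) (hβ : 0 < β)
    (R : (Fin n → ℝ) → ℝ) (hR : StronglyConvexOnWrt F β p R)
    (x : ℕ → (Fin n → ℝ))
    (f h : ℕ → (Fin n → ℝ))
    (hf : ∀ t ∈ Finset.Icc 1 T, f t ∈ F ∧
      ∀ f' ∈ F,
        ip (f t) ((∑ s ∈ Finset.Icc 1 (t - 1), x s) + α • x (t - 1)) + R (f t) / η ≤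
        ip f' ((∑ s ∈ Finset.Icc 1 (t - 1), x s) + α • x (t - 1)) + R f' / η)
    (hh : ∀ t ∈ Finset.Icc 1 T, h t ∈ F ∧
      ∀ f' ∈ F,
        ip (h t) ((∑ s ∈ Finset.Icc 1 (t - 1), x s) + α • x t) + R (h t) / η ≤
        ip f' ((∑ s ∈ Finset.Icc 1 (t - 1), x s) + α • x t) + R f' / η) :
    ∀ t ∈ Finset.Icc 1 T,
      lpNorm p (h t - f t) ≤ η * α / β * lpNorm q (x t - x (t - 1)) := by
  intro t ht
  have : p.HolderConjugate q :=
    ENNReal.holderConjugate_iff.mpr (by simpa only [one_div] using hpq)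
  have : Fact (1 ≤ q) := ⟨ENNReal.HolderConjugate.one_le q p⟩
  obtain ⟨hfF, hfmin⟩ := hf t ht
  obtain ⟨hhF, hhmin⟩ := hh t ht
  have hshift : ((∑ s ∈ Finset.Icc 1 (t - 1), x s) + α • x t) -
      ((∑ s ∈ Finset.Icc 1 (t - 1), x s) + α • x (t - 1)) = α • (x t - x (t - 1)) := by
    rw [smul_sub]
    abel
  calc lpNorm p (h t - f t)
      ≤ η / β * lpNorm q (α • (x t - x (t - 1))) := by
        rw [← hshift]
        exact hR.lpNorm_sub_le_of_isMinOn hFconv hβ hη hhF hhmin hfF hfmin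
    _ = η * α / β * lpNorm q (x t - x (t - 1)) := by
        rw [lpNorm_smul, abs_of_nonneg (by linarith)]
        ring

/-- **Stability of AFTRL against its one-step-lookahead iterate:**
`‖h t - f t‖_p ≤ (η α / β) ‖x t - x (t-1)‖_q`. -/
theorem aftrl_lookahead_close {n T : ℕ} (p q : ℝ≥0∞)
    (hp : 1 ≤ p) (hq : 1 ≤ q) (hpq : 1 / p + 1 / q = 1)
    (F : Set (Fin n → ℝ)) (hFsub : F ⊆ Set.Icc 0 1) (hFconv : Convex ℝ F)
    (η : ℝ) (hη : 0 < η) (α : ℝ) (hα : 1 ≤ α) (β : ℝ) (hβ : 0 < β)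
    (R : (Fin n → ℝ) → ℝ) (hR : StronglyConvexOnWrt F β p R)
    (x : ℕ → (Fin n → ℝ)) (hx0 : x 0 = 0)
    (hx : ∀ t ∈ Finset.Icc 1 T, x t ∈ Set.Icc (0 : Fin n → ℝ) 1)
    (f h : ℕ → (Fin n → ℝ))
    (hf : ∀ t ∈ Finset.Icc 1 T, f t ∈ F ∧
      ∀ f' ∈ F,
        ip (f t) ((∑ s ∈ Finset.Icc 1 (t - 1), x s) + α • x (t - 1)) + R (f t) / η ≤
        ip f' ((∑ s ∈ Finset.Icc 1 (t - 1), x s) + α • x (t - 1)) + R f' / η)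
    (hh : ∀ t ∈ Finset.Icc 1 T, h t ∈ F ∧
      ∀ f' ∈ F,
        ip (h t) ((∑ s ∈ Finset.Icc 1 (t - 1), x s) + α • x t) + R (h t) / η ≤
        ip f' ((∑ s ∈ Finset.Icc 1 (t - 1), x s) + α • x t) + R f' / η) :
    ∀ t ∈ Finset.Icc 1 T,
      lpNorm p (h t - f t) ≤ η * α / β * lpNorm q (x t - x (t - 1)) :=
  aftrl_lookahead_close_general p q hpq F hFconv η hη α hα β hβ R hR x f h hf hh
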